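/- arXiv:quant-ph/0302115 — 2 statements merged into one kernel-verified Lean document; each statement's English description precedes it below -/
import Mathlib

section
/- Let (Ω, Σ, μ) be a probability space, A, B ∈ Σ with μ(A ∪ B) < 1, and C ∈ Σ with C ⊆ A ∩ B, 0 < μ(C) < 1, and μ(C) = (μ(A∩B) − μ(A)μ(B))/(1 − μ(A∪B)). Then μ(A ∩ B | Cᶜ) = μ(A|Cᶜ)μ(B|Cᶜ). -/
open MeasureTheory

/-- Conditional probability `μ(X|Y) = μ(X ∩ Y)/μ(Y)` as a real number. -/
noncomputable def condProb {Ω : Type*} [MeasurableSpace Ω] (μ : MeasureTheory.Measure Ω) (X Y : Set Ω) : ℝ :=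
  (μ (X ∩ Y)).toReal / (μ Y).toReal

lemma inter_compl_toReal {Ω : Type*} [MeasurableSpace Ω] (μ : Measure Ω) [IsProbabilityMeasure μ]
    {S C : Set Ω} (hC : MeasurableSet C) (hsub : C ⊆ S) :
    (μ (S ∩ Cᶜ)).toReal = (μ S).toReal - (μ C).toReal := by
  have h1 : S ∩ Cᶜ = S \ C := rfl
  rw [h1, measure_diff hsub hC.nullMeasurableSet (measure_ne_top μ C),
    ENNReal.toReal_sub_of_le (measure_mono hsub) (measure_ne_top μ S)]

/-- Screening off on the complement of the common cause. -/
theorem stmt_13 {Ω : Type*} [MeasurableSpace Ω] (μ : Measure Ω) [IsProbabilityMeasure μ]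
    (A B C : Set Ω) (hA : MeasurableSet A) (hB : MeasurableSet B) (hC : MeasurableSet C)
    (hAB1 : (μ (A ∪ B)).toReal < 1)
    (hCsub : C ⊆ A ∩ B) (hC0 : 0 < (μ C).toReal) (hC1 : (μ C).toReal < 1)
    (hCval : (μ C).toReal =
      ((μ (A ∩ B)).toReal - (μ A).toReal * (μ B).toReal) / (1 - (μ (A ∪ B)).toReal)) :
    condProb μ (A ∩ B) Cᶜ = condProb μ A Cᶜ * condProb μ B Cᶜ := by
  set a := (μ A).toReal
  set b := (μ B).toReal
  set c := (μ C).toReal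
  set ab := (μ (A ∩ B)).toReal
  set u := (μ (A ∪ B)).toReal
  have hsubA : C ⊆ A := fun x hx => (hCsub hx).1
  have hsubB : C ⊆ B := fun x hx => (hCsub hx).2
  have hcompl : (μ Cᶜ).toReal = 1 - c := by
    rw [measure_compl hC (measure_ne_top μ C)]
    rw [measure_univ, ENNReal.toReal_sub_of_le prob_le_one ENNReal.one_ne_top, ENNReal.toReal_one]
  have hAc : (μ (A ∩ Cᶜ)).toReal = a - c := inter_compl_toReal μ hC hsubA
  have hBc : (μ (B ∩ Cᶜ)).toReal = b - c := inter_compl_toReal μ hC hsubB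
  have hABc : (μ (A ∩ B ∩ Cᶜ)).toReal = ab - c := inter_compl_toReal μ hC hCsub
  have hincl : u + ab = a + b := by
    have := measure_union_add_inter (μ := μ) A hB
    have := congrArg ENNReal.toReal this
    rwa [ENNReal.toReal_add (measure_ne_top μ _) (measure_ne_top μ _),
      ENNReal.toReal_add (measure_ne_top μ _) (measure_ne_top μ _)] at this
  have hu1 : 1 - u ≠ 0 := by linarith
  have hkey : c * (1 - u) = ab - a * b := by
    field_simp at hCval
    linarith
  have hc1 : (1 : ℝ) - c ≠ 0 := by linarith
  unfold condProb
  rw [hAc, hBc, hABc, hcompl]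
  field_simp
  nlinarith [hkey, hincl]
end

section
/- Let μ be a probability measure, and A, B, C events with C ⊆ A ∩ B, 0 < μ(C) < 1, μ(A ∪ B) < 1, and μ(C) = (μ(A∩B) − μ(A)μ(B))/(1 − μ(A∪B)) > 0. Then μ(A|C) > μ(A|Cᶜ) and μ(B|C) > μ(B|Cᶜ). -/
open MeasureTheory

lemma condProb_aux {Ω : Type*} [MeasurableSpace Ω] (μ : Measure Ω) [IsProbabilityMeasure μ]
    (X C : Set Ω) (hC : MeasurableSet C)
    (hsub : C ⊆ X) (hC0 : 0 < (μ C).toReal) (hC1 : (μ C).toReal < 1)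
    (hX1 : (μ X).toReal < 1) : condProb μ X C > condProb μ X Cᶜ := by
  have hXC : X ∩ C = C := Set.inter_eq_right.mpr hsub
  have h1 : condProb μ X C = 1 := by
    rw [condProb, hXC, div_self hC0.ne']
  have hm : (μ (X ∩ Cᶜ)).toReal = (μ X).toReal - (μ C).toReal := by
    rw [← Set.diff_eq, measure_diff hsub hC.nullMeasurableSet (measure_ne_top μ C)]
    exact ENNReal.toReal_sub_of_le (measure_mono hsub) (measure_ne_top μ X)
  have hmc : (μ Cᶜ).toReal = 1 - (μ C).toReal := by
    rw [prob_compl_eq_one_sub hC, ENNReal.toReal_sub_of_le prob_le_one ENNReal.one_ne_top]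
    simp
  rw [h1]
  show condProb μ X Cᶜ < 1
  rw [condProb, hm, hmc, div_lt_one (by linarith)]
  linarith

/-- The probability-raising conditions for the common cause. -/
theorem stmt_17 {Ω : Type*} [MeasurableSpace Ω] (μ : Measure Ω) [IsProbabilityMeasure μ]
    (A B C : Set Ω) (hA : MeasurableSet A) (hB : MeasurableSet B) (hC : MeasurableSet C)
    (hCsub : C ⊆ A ∩ B) (hC0 : 0 < (μ C).toReal) (hC1 : (μ C).toReal < 1)
    (hAB1 : (μ (A ∪ B)).toReal < 1)
    (hCval : (μ C).toReal =
      ((μ (A ∩ B)).toReal - (μ A).toReal * (μ B).toReal) / (1 - (μ (A ∪ B)).toReal))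
    (hCpos : 0 < ((μ (A ∩ B)).toReal - (μ A).toReal * (μ B).toReal) / (1 - (μ (A ∪ B)).toReal)) :
    condProb μ A C > condProb μ A Cᶜ ∧ condProb μ B C > condProb μ B Cᶜ := by
  have hden : (0:ℝ) < 1 - (μ (A ∪ B)).toReal := by linarith
  have hnum : 0 < (μ (A ∩ B)).toReal - (μ A).toReal * (μ B).toReal := by
    by_contra h
    push_neg at h
    have : ((μ (A ∩ B)).toReal - (μ A).toReal * (μ B).toReal) / (1 - (μ (A ∪ B)).toReal) ≤ 0 :=
      div_nonpos_of_nonpos_of_nonneg h hden.le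
    linarith
  have hABle : (μ (A ∩ B)).toReal ≤ (μ A).toReal :=
    ENNReal.toReal_mono (measure_ne_top μ A) (measure_mono Set.inter_subset_left)
  have hABleB : (μ (A ∩ B)).toReal ≤ (μ B).toReal :=
    ENNReal.toReal_mono (measure_ne_top μ B) (measure_mono Set.inter_subset_right)
  have hAnn : 0 ≤ (μ A).toReal := ENNReal.toReal_nonneg
  have hBnn : 0 ≤ (μ B).toReal := ENNReal.toReal_nonneg
  have hApos : 0 < (μ A).toReal := by nlinarith
  have hBpos : 0 < (μ B).toReal := by nlinarith
  have hA1 : (μ A).toReal < 1 := by nlinarith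
  have hB1 : (μ B).toReal < 1 := by nlinarith
  exact ⟨condProb_aux μ A C hC (fun x hx => (hCsub hx).1) hC0 hC1 hA1,
    condProb_aux μ B C hC (fun x hx => (hCsub hx).2) hC0 hC1 hB1⟩
end
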